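/- (Minimax exchange.) Fix β > 0, x ≥ 0, μ ∈ ℝ and λ₀ > 0, and define Ψ(y,α) := α(y + x) − f₀ᴮ(β,y,x) + (μ − α)²/(2λ₀) for y ≥ 0 and α ≤ 0. Then Ψ is concave in y for each fixed α, strictly convex in α for each fixed y, and the infimum over α ≤ 0 and the supremum over y ≥ 0 commute: inf_{α ≤ 0} sup_{y ≥ 0} Ψ(y,α) = sup_{y ≥ 0} inf_{α ≤ 0} Ψ(y,α). -/

import Mathlib

/-!
Write `Ψ(y, α) = q(y, α) - f(y)` with `q(y, α) = α (y + x) + (μ - α)² / (2λ₀)` and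
`f = f₀ᴮ(β, ·, x)`. As a supremum of affine functions of `y`, `f` is convex, and it is bounded
below by `-p₀ᴮ(β, 0, x)` because both integrals in `p₀ᴮ` have a sign. Minimising the quadratic
`q(y, ·)` over `α ≤ 0` gives `m(y) = (μ² - a(y)²) / (2λ₀)` with `a(y) = min (μ - λ₀ (x + y)) 0`,
so the right-hand side is `S = sup (m - f)`, and `S ≤ inf sup` is weak duality.

Conversely, `m` is semiconcave: `m(z) ≥ m(y) + a(y) (z - y) - λ₀ (z - y)² / 2`. At a
`δ`-maximiser `y₀` of `m - f` this gives `f` a parabolic minorant touching it up to `δ` at `y₀`;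
convexity of `f` along chords turns it into an affine minorant of slope `a(y₀)` with error
`σ |z - y₀|` as soon as `2 λ₀ δ ≤ σ²`. Then `sup_y Ψ(y, a(y₀) - σ) ≤ S + O(σ)`, uniformly because
the near-maximisers `y₀` stay in a fixed bounded interval.
-/

open MeasureTheory Real Filter Set

/-- One-particle energy `ε_k = ‖k‖²/2` (units `ħ = m = 1`). -/
noncomputable def eps (k : EuclideanSpace ℝ (Fin 3)) : ℝ := ‖k‖ ^ 2 / 2

/-- Pressure of the Bogoliubov approximation `p₀ᴮ(β,α,x)`. -/
noncomputable def p0B (lam : EuclideanSpace ℝ (Fin 3) → ℝ) (β α x : ℝ) : ℝ :=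
  α * x
    - (β * (2 * π) ^ 3)⁻¹ *
        (∫ k : EuclideanSpace ℝ (Fin 3),
          Real.log (1 - Real.exp (-(β * Real.sqrt ((eps k - α) * (eps k - α + 2 * x * lam k))))))
    + (2 * (2 * π) ^ 3)⁻¹ *
        (∫ k : EuclideanSpace ℝ (Fin 3),
          (eps k - α + x * lam k - Real.sqrt ((eps k - α) * (eps k - α + 2 * x * lam k))))

/-- Legendre–Fenchel transform `f₀ᴮ(β,y,x) = sup_{α ≤ 0} {α(y+x) − p₀ᴮ(β,α,x)}`. -/
noncomputable def f0B (lam : EuclideanSpace ℝ (Fin 3) → ℝ) (β y x : ℝ) : ℝ :=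
  sSup {v : ℝ | ∃ α ≤ (0 : ℝ), v = α * (y + x) - p0B lam β α x}

/-- The function `Ψ(y,α) := α(y+x) − f₀ᴮ(β,y,x) + (μ−α)²/(2λ₀)` with `λ₀ = λ(0)`. -/
noncomputable def Psi (lam : EuclideanSpace ℝ (Fin 3) → ℝ) (β x μ y α : ℝ) : ℝ :=
  α * (y + x) - f0B lam β y x + (μ - α) ^ 2 / (2 * lam 0)

noncomputable def coupling (L x μ y α : ℝ) : ℝ := α * (y + x) + (μ - α) ^ 2 / (2 * L)

-- the unconstrained minimiser `μ - L (x + y)` of `coupling L x μ y`, clipped to `α ≤ 0`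
noncomputable def couplingArgmin (L x μ y : ℝ) : ℝ := min (μ - L * (x + y)) 0

noncomputable def couplingMin (L x μ y : ℝ) : ℝ := (μ ^ 2 - couplingArgmin L x μ y ^ 2) / (2 * L)

section Coupling

variable {L x μ : ℝ}

lemma couplingArgmin_nonpos (y : ℝ) : couplingArgmin L x μ y ≤ 0 := min_le_right _ _

lemma coupling_eq_add_mul (y z α : ℝ) :
    coupling L x μ z α = coupling L x μ y α + α * (z - y) := by
  unfold coupling; ring

lemma coupling_eq_couplingMin_add (hL : 0 < L) (y α : ℝ) :
    coupling L x μ y α = couplingMin L x μ y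
      + (couplingArgmin L x μ y - α) * (μ - L * (x + y) - couplingArgmin L x μ y) / L
      + (couplingArgmin L x μ y - α) ^ 2 / (2 * L) := by
  unfold coupling couplingMin couplingArgmin
  rcases le_total (μ - L * (x + y)) 0 with h | h
  · rw [min_eq_left h]; field_simp; ring
  · rw [min_eq_right h]; field_simp; ring

lemma couplingMin_le_coupling (hL : 0 < L) (y : ℝ) {α : ℝ} (hα : α ≤ 0) :
    couplingMin L x μ y ≤ coupling L x μ y α := by
  rw [coupling_eq_couplingMin_add hL y α]
  have hprod : 0 ≤ (couplingArgmin L x μ y - α) * (μ - L * (x + y) - couplingArgmin L x μ y) := by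
    unfold couplingArgmin
    rcases le_total (μ - L * (x + y)) 0 with h | h
    · simp [min_eq_left h]
    · rw [min_eq_right h]; nlinarith
  have := div_nonneg hprod hL.le
  have : 0 ≤ (couplingArgmin L x μ y - α) ^ 2 / (2 * L) := by positivity
  linarith

lemma coupling_couplingArgmin (hL : 0 < L) (y : ℝ) :
    coupling L x μ y (couplingArgmin L x μ y) = couplingMin L x μ y := by
  simp [coupling_eq_couplingMin_add hL]

lemma isLeast_coupling_sub (hL : 0 < L) (y c : ℝ) :
    IsLeast {w | ∃ α ≤ (0 : ℝ), w = coupling L x μ y α - c} (couplingMin L x μ y - c) :=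
  ⟨⟨couplingArgmin L x μ y, couplingArgmin_nonpos y, by rw [coupling_couplingArgmin hL]⟩,
    by rintro _ ⟨α, hα, rfl⟩; linarith [couplingMin_le_coupling (x := x) (μ := μ) hL y hα]⟩

lemma couplingMin_le (hL : 0 < L) (y : ℝ) : couplingMin L x μ y ≤ μ ^ 2 / (2 * L) := by
  simpa [coupling] using couplingMin_le_coupling (x := x) (μ := μ) hL y le_rfl

lemma coupling_couplingArgmin_sub_le (hL : 0 < L) {y σ : ℝ} (hy : 0 ≤ y) (hσ : 0 ≤ σ) :
    coupling L x μ y (couplingArgmin L x μ y - σ)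
      ≤ couplingMin L x μ y + σ * (max (μ - L * x) 0 / L) + σ ^ 2 / (2 * L) := by
  rw [coupling_eq_couplingMin_add hL, sub_sub_cancel, mul_div_assoc]
  have : μ - L * (x + y) - couplingArgmin L x μ y ≤ max (μ - L * x) 0 := by
    unfold couplingArgmin
    rcases le_total (μ - L * (x + y)) 0 with h | h
    · simp [min_eq_left h]
    · rw [min_eq_right h, sub_zero]; exact le_max_of_le_left (by nlinarith)
  gcongr

lemma add_mul_sub_sq_le_couplingMin (hL : 0 < L) (y z : ℝ) :
    couplingMin L x μ y + couplingArgmin L x μ y * (z - y) - L / 2 * (z - y) ^ 2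
      ≤ couplingMin L x μ z := by
  have key : couplingArgmin L x μ z ^ 2 ≤ (couplingArgmin L x μ y - L * (z - y)) ^ 2 := by
    unfold couplingArgmin
    rcases le_total (μ - L * (x + y)) 0 with hy | hy <;>
      rcases le_total (μ - L * (x + z)) 0 with hz | hz <;>
      simp only [min_eq_left, min_eq_right, hy, hz] <;> nlinarith
  unfold couplingMin
  rw [← sub_nonneg]
  have e : (μ ^ 2 - couplingArgmin L x μ z ^ 2) / (2 * L)
      - ((μ ^ 2 - couplingArgmin L x μ y ^ 2) / (2 * L)
        + couplingArgmin L x μ y * (z - y) - L / 2 * (z - y) ^ 2)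
      = ((couplingArgmin L x μ y - L * (z - y)) ^ 2 - couplingArgmin L x μ z ^ 2) / (2 * L) := by
    field_simp; ring
  rw [e]
  exact div_nonneg (by linarith) (by positivity)

lemma exists_le_of_le_couplingMin (hL : 0 < L) (c : ℝ) :
    ∃ Y ≥ 0, ∀ y, c ≤ couplingMin L x μ y → y ≤ Y := by
  refine ⟨max ((μ - L * x + 1 + μ ^ 2 - 2 * L * c) / L) 0, le_max_right _ _, fun y hy => ?_⟩
  refine le_max_of_le_left ((le_div_iff₀ hL).2 ?_)
  have hsq : couplingArgmin L x μ y ^ 2 ≤ μ ^ 2 - 2 * L * c := by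
    unfold couplingMin at hy; rw [le_div_iff₀ (by positivity)] at hy; linarith
  have : couplingArgmin L x μ y ≤ μ - L * (x + y) := min_le_left _ _
  nlinarith [sq_nonneg (couplingArgmin L x μ y + 1 / 2)]

end Coupling

lemma ConvexOn.le_of_quadratic_minorant {s : Set ℝ} {f : ℝ → ℝ} (hf : ConvexOn ℝ s f)
    {y₀ a L δ σ : ℝ} (hy₀ : y₀ ∈ s) (hσ : 0 < σ) (hδ : 2 * L * δ ≤ σ ^ 2)
    (hq : ∀ z ∈ s, f y₀ + a * (z - y₀) - L / 2 * (z - y₀) ^ 2 - δ ≤ f z) {z : ℝ} (hz : z ∈ s) :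
    f y₀ + a * (z - y₀) - σ * |z - y₀| - δ ≤ f z := by
  set d := z - y₀
  have hδ₀ : 0 ≤ δ := by simpa using hq y₀ hy₀
  have chord : ∀ t, 0 < t → t ≤ 1 → -(L / 2 * t ^ 2 * d ^ 2 + δ) ≤ t * (f z - f y₀ - a * d) := by
    intro t ht₀ ht₁
    have hconv := hf.2 hy₀ hz (by linarith : 0 ≤ 1 - t) ht₀.le (by ring)
    have hmin := hq _ (hf.1 hy₀ hz (by linarith : 0 ≤ 1 - t) ht₀.le (by ring))
    simp only [smul_eq_mul] at hconv hmin
    have e : (1 - t) * y₀ + t * z - y₀ = t * d := by ring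
    rw [e] at hmin
    nlinarith
  have hd2 : d ^ 2 = |d| * |d| := by rw [← sq_abs, sq]
  rcases le_or_gt (L * |d|) σ with hsmall | hlarge
  · have hquad : L * d ^ 2 ≤ σ * |d| := by
      rw [hd2, ← mul_assoc]; exact mul_le_mul_of_nonneg_right hsmall (abs_nonneg d)
    have := chord 1 one_pos le_rfl
    nlinarith [mul_nonneg hσ.le (abs_nonneg d)]
  · -- the optimal rescaling `t = σ / (L |d|)` turns the quadratic error into `σ |d|`
    have hLd : 0 < L * |d| := hσ.trans hlarge
    set t := σ / (L * |d|)
    have ht : t * (L * |d|) = σ := div_mul_cancel₀ σ hLd.ne'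
    have hchord := chord t (div_pos hσ hLd) ((div_le_one hLd).2 hlarge.le)
    have hquad : L / 2 * t ^ 2 * d ^ 2 = t * σ * |d| / 2 := by rw [hd2, ← ht]; ring
    have hslack : 2 * δ ≤ t * σ * |d| := by
      refine le_of_mul_le_mul_left ?_ hσ
      calc σ * (2 * δ) = t * (2 * L * δ * |d|) := by rw [← ht]; ring
        _ ≤ t * (σ ^ 2 * |d|) := by gcongr
        _ = σ * (t * σ * |d|) := by ring
    have ht₀ : 0 < t := div_pos hσ hLd
    refine le_of_mul_le_mul_left ?_ ht₀
    nlinarith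

section Minimax

variable {L x μ : ℝ} {f : ℝ → ℝ}

lemma coupling_sub_le_of_affine_minorant (hL : 0 < L) {y₀ σ δ : ℝ} (hy₀ : 0 ≤ y₀) (hσ : 0 ≤ σ)
    (hf : ∀ z ∈ Ici (0 : ℝ),
      f y₀ + couplingArgmin L x μ y₀ * (z - y₀) - σ * |z - y₀| - δ ≤ f z)
    {z : ℝ} (hz : 0 ≤ z) :
    coupling L x μ z (couplingArgmin L x μ y₀ - σ) - f z
      ≤ couplingMin L x μ y₀ - f y₀ + σ * (2 * y₀ + max (μ - L * x) 0 / L) + σ ^ 2 / (2 * L)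
        + δ := by
  have habs : |z - y₀| ≤ z - y₀ + 2 * y₀ := abs_le.2 ⟨by linarith, by linarith⟩
  have := coupling_couplingArgmin_sub_le (x := x) (μ := μ) hL hy₀ hσ
  rw [coupling_eq_add_mul y₀]
  nlinarith [hf z hz, mul_le_mul_of_nonneg_left habs hσ]

lemma exists_forall_coupling_sub_le (hL : 0 < L) (hf : ConvexOn ℝ (Ici 0) f) {h₀ : ℝ}
    (hf₀ : ∀ y ≥ 0, h₀ ≤ f y) {S : ℝ}
    (hS : IsLUB {v | ∃ y ≥ (0 : ℝ), v = couplingMin L x μ y - f y} S) {ε : ℝ}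
    (hε : 0 < ε) : ∃ α ≤ (0 : ℝ), ∀ z ≥ (0 : ℝ), coupling L x μ z α - f z ≤ S + ε := by
  have hS₀ : couplingMin L x μ 0 - f 0 ≤ S := hS.1 ⟨0, le_rfl, rfl⟩
  -- near-maximisers of `couplingMin - f` stay in a fixed bounded interval `[0, Y]`
  obtain ⟨Y, hY₀, hY⟩ :=
    exists_le_of_le_couplingMin (x := x) (μ := μ) hL (couplingMin L x μ 0 - f 0 - 1 + h₀)
  set C := 2 * Y + max (μ - L * x) 0 / L + 1 / L
  have hC : 0 < C := by positivity
  set σ := min 1 (ε / C)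
  have hσ : 0 < σ := lt_min one_pos (div_pos hε hC)
  have hσ₁ : σ ≤ 1 := min_le_left _ _
  have hσC : σ * C ≤ ε := (le_div_iff₀ hC).1 (min_le_right _ _)
  set δ := min 1 (σ ^ 2 / (2 * L))
  have hδ : 0 < δ := lt_min one_pos (by positivity)
  have hδL : 2 * L * δ ≤ σ ^ 2 := by
    have := min_le_right 1 (σ ^ 2 / (2 * L)); rw [le_div_iff₀ (by positivity)] at this; linarith
  obtain ⟨_, ⟨y₀, hy₀, rfl⟩, hy₀S, -⟩ := hS.exists_between (sub_lt_self S hδ)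
  have hy₀Y : y₀ ≤ Y := hY y₀ (by linarith [hf₀ y₀ hy₀, min_le_left 1 (σ ^ 2 / (2 * L))])
  have hquad : ∀ z ∈ Ici (0 : ℝ), f y₀ + couplingArgmin L x μ y₀ * (z - y₀)
      - L / 2 * (z - y₀) ^ 2 - δ ≤ f z := fun z hz => by
    linarith [hS.1 ⟨z, hz, rfl⟩, add_mul_sub_sq_le_couplingMin (x := x) (μ := μ) hL y₀ z]
  have hslack : σ ^ 2 / (2 * L) + δ ≤ σ * (1 / L) := by
    have : σ ^ 2 ≤ σ := by nlinarith
    calc σ ^ 2 / (2 * L) + δ ≤ σ ^ 2 / (2 * L) + σ ^ 2 / (2 * L) := by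
          gcongr; exact min_le_right _ _
      _ = σ ^ 2 / L := by ring
      _ ≤ σ * (1 / L) := by rw [mul_one_div]; gcongr
  refine ⟨couplingArgmin L x μ y₀ - σ,
    by linarith [couplingArgmin_nonpos (L := L) (x := x) (μ := μ) y₀], fun z hz => ?_⟩
  have hbound := coupling_sub_le_of_affine_minorant hL hy₀ hσ.le
    (fun z hz => hf.le_of_quadratic_minorant hy₀ hσ hδL hquad hz) hz
  nlinarith [hS.1 ⟨y₀, hy₀, rfl⟩]

theorem sInf_sSup_coupling_sub_eq_sSup_sInf (hL : 0 < L) (hf : ConvexOn ℝ (Ici 0) f) {h₀ : ℝ}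
    (hf₀ : ∀ y ≥ 0, h₀ ≤ f y) :
    sInf {v | ∃ α ≤ (0 : ℝ), v = sSup {w | ∃ y ≥ (0 : ℝ), w = coupling L x μ y α - f y}}
      = sSup {v | ∃ y ≥ (0 : ℝ), v = sInf {w | ∃ α ≤ (0 : ℝ), w = coupling L x μ y α - f y}} := by
  set T := {v | ∃ y ≥ (0 : ℝ), v = couplingMin L x μ y - f y}
  have hT : {v | ∃ y ≥ (0 : ℝ), v = sInf {w | ∃ α ≤ (0 : ℝ), w = coupling L x μ y α - f y}}
      = T := by
    simp only [fun y => (isLeast_coupling_sub (x := x) (μ := μ) hL y (f y)).csInf_eq, T]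
  have hTbdd : BddAbove T := ⟨μ ^ 2 / (2 * L) - h₀, by
    rintro _ ⟨y, hy, rfl⟩; linarith [couplingMin_le (x := x) (μ := μ) hL y, hf₀ y hy]⟩
  have hS := isLUB_csSup (⟨_, 0, le_rfl, rfl⟩ : T.Nonempty) hTbdd
  have hbdd : ∀ α ≤ (0 : ℝ), BddAbove {w | ∃ y ≥ (0 : ℝ), w = coupling L x μ y α - f y} :=
    fun α hα => ⟨α * x + (μ - α) ^ 2 / (2 * L) - h₀, by
      rintro _ ⟨y, hy, rfl⟩; unfold coupling; nlinarith [hf₀ y hy]⟩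
  have hweak : sSup T ∈ lowerBounds {v | ∃ α ≤ (0 : ℝ),
      v = sSup {w | ∃ y ≥ (0 : ℝ), w = coupling L x μ y α - f y}} := by
    rintro _ ⟨α, hα, rfl⟩
    refine csSup_le ⟨_, 0, le_rfl, rfl⟩ ?_
    rintro _ ⟨y, hy, rfl⟩
    exact (sub_le_sub_right (couplingMin_le_coupling hL y hα) _).trans
      (le_csSup (hbdd α hα) ⟨y, hy, rfl⟩)
  rw [hT]
  refine le_antisymm (le_of_forall_pos_le_add fun ε hε => ?_) (le_csInf ⟨_, 0, le_rfl, rfl⟩ hweak)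
  obtain ⟨α, hα, hΨ⟩ := exists_forall_coupling_sub_le hL hf hf₀ hS hε
  calc _ ≤ sSup {w | ∃ y ≥ (0 : ℝ), w = coupling L x μ y α - f y} :=
        csInf_le ⟨_, hweak⟩ ⟨α, hα, rfl⟩
    _ ≤ sSup T + ε := csSup_le ⟨_, 0, le_rfl, rfl⟩ (by rintro _ ⟨z, hz, rfl⟩; exact hΨ z hz)

end Minimax

lemma concaveOn_coupling_sub {L x μ α : ℝ} {s : Set ℝ} {f : ℝ → ℝ} (hf : ConvexOn ℝ s f) :
    ConcaveOn ℝ s (fun y => coupling L x μ y α - f y) := by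
  refine ConcaveOn.sub ⟨hf.1, fun a _ b _ s t _ _ hst => le_of_eq ?_⟩ hf
  simp only [coupling, smul_eq_mul]
  linear_combination (α * x + (μ - α) ^ 2 / (2 * L)) * hst

lemma strictConvexOn_coupling_sub {L x μ y : ℝ} (hL : 0 < L) (c : ℝ) {s : Set ℝ}
    (hs : Convex ℝ s) : StrictConvexOn ℝ s (fun α => coupling L x μ y α - c) := by
  refine ⟨hs, fun p _ q _ hpq a b ha hb hab => ?_⟩
  have hgap : 0 < a * b * (p - q) ^ 2 / (2 * L) := by
    have := sub_ne_zero.2 hpq; positivity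
  obtain rfl : b = 1 - a := by linarith
  simp only [coupling, smul_eq_mul]
  have e : a * (p * (y + x) + (μ - p) ^ 2 / (2 * L) - c)
      + (1 - a) * (q * (y + x) + (μ - q) ^ 2 / (2 * L) - c)
      - ((a * p + (1 - a) * q) * (y + x) + (μ - (a * p + (1 - a) * q)) ^ 2 / (2 * L) - c)
      = a * (1 - a) * (p - q) ^ 2 / (2 * L) := by
    field_simp; ring
  linarith

lemma eps_nonneg (k : EuclideanSpace ℝ (Fin 3)) : 0 ≤ eps k := by unfold eps; positivity

lemma log_one_sub_exp_neg_nonpos {t : ℝ} (ht : 0 ≤ t) : log (1 - exp (-t)) ≤ 0 :=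
  log_nonpos (by linarith [exp_le_one_iff.2 (neg_nonpos.2 ht)]) (by linarith [exp_pos (-t)])

lemma sqrt_mul_add_two_mul_le {a b c : ℝ} (ha : 0 ≤ a) (hbc : 0 ≤ b * c) :
    √(a * (a + 2 * b * c)) ≤ a + b * c :=
  sqrt_le_iff.2 ⟨by linarith, by nlinarith⟩

section Bogoliubov

variable {lam : EuclideanSpace ℝ (Fin 3) → ℝ} {β x : ℝ}

lemma mul_le_p0B (hβ : 0 ≤ β) (hx : 0 ≤ x) (hlam : ∀ k, 0 ≤ lam k) {α : ℝ} (hα : α ≤ 0) :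
    α * x ≤ p0B lam β α x := by
  have hthermal : ∫ k, log (1 - exp (-(β * √((eps k - α) * (eps k - α + 2 * x * lam k))))) ≤ 0 :=
    integral_nonpos fun k => log_one_sub_exp_neg_nonpos (by positivity)
  have hground : 0 ≤ ∫ k, (eps k - α + x * lam k - √((eps k - α) * (eps k - α + 2 * x * lam k))) :=
    integral_nonneg fun k => sub_nonneg.2 <|
      sqrt_mul_add_two_mul_le (by linarith [eps_nonneg k]) (mul_nonneg hx (hlam k))
  unfold p0B
  have : 0 ≤ (β * (2 * π) ^ 3)⁻¹ := by positivity
  have : 0 ≤ (2 * (2 * π) ^ 3)⁻¹ := by positivity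
  nlinarith

lemma bddAbove_f0B_set (hp : ∀ α ≤ (0 : ℝ), α * x ≤ p0B lam β α x) {y : ℝ} (hy : 0 ≤ y) :
    BddAbove {v : ℝ | ∃ α ≤ (0 : ℝ), v = α * (y + x) - p0B lam β α x} :=
  ⟨0, by rintro _ ⟨α, hα, rfl⟩; nlinarith [hp α hα, mul_nonpos_of_nonpos_of_nonneg hα hy]⟩

lemma le_f0B (hp : ∀ α ≤ (0 : ℝ), α * x ≤ p0B lam β α x) {y α : ℝ} (hy : 0 ≤ y)
    (hα : α ≤ 0) : α * (y + x) - p0B lam β α x ≤ f0B lam β y x :=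
  le_csSup (bddAbove_f0B_set hp hy) ⟨α, hα, rfl⟩

lemma neg_p0B_zero_le_f0B (hp : ∀ α ≤ (0 : ℝ), α * x ≤ p0B lam β α x) {y : ℝ}
    (hy : 0 ≤ y) : -p0B lam β 0 x ≤ f0B lam β y x := by
  simpa using le_f0B hp hy le_rfl

lemma convexOn_f0B (hp : ∀ α ≤ (0 : ℝ), α * x ≤ p0B lam β α x) :
    ConvexOn ℝ (Ici 0) (fun y => f0B lam β y x) := by
  refine ⟨convex_Ici 0, fun a ha b hb s t hs ht hst => ?_⟩
  refine csSup_le ⟨_, 0, le_rfl, rfl⟩ ?_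
  rintro _ ⟨α, hα, rfl⟩
  calc α * (s • a + t • b + x) - p0B lam β α x
      = s * (α * (a + x) - p0B lam β α x) + t * (α * (b + x) - p0B lam β α x) := by
        simp only [smul_eq_mul]; linear_combination (p0B lam β α x - α * x) * hst
    _ ≤ s • f0B lam β a x + t • f0B lam β b x := by
        simp only [smul_eq_mul]
        gcongr
        exacts [le_f0B hp ha hα, le_f0B hp hb hα]

end Bogoliubov

lemma Psi_eq_coupling_sub (lam : EuclideanSpace ℝ (Fin 3) → ℝ) (β x μ y α : ℝ) :
    Psi lam β x μ y α = coupling (lam 0) x μ y α - f0B lam β y x := by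
  unfold Psi coupling; ring

theorem stmt_5_general (lam : EuclideanSpace ℝ (Fin 3) → ℝ)
    (hlam0 : 0 < lam 0)
    (hlam_bd : ∀ k, 0 ≤ lam k ∧ lam k ≤ lam 0)
    (β x μ : ℝ) (hβ : 0 < β) (hx : 0 ≤ x) :
    (∀ α ≤ (0 : ℝ), ConcaveOn ℝ (Set.Ici (0 : ℝ)) (fun y => Psi lam β x μ y α)) ∧
    (∀ y ≥ (0 : ℝ), StrictConvexOn ℝ (Set.Iic (0 : ℝ)) (fun α => Psi lam β x μ y α)) ∧
    sInf {v : ℝ | ∃ α ≤ (0 : ℝ),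
        v = sSup {w : ℝ | ∃ y ≥ (0 : ℝ), w = Psi lam β x μ y α}}
      = sSup {v : ℝ | ∃ y ≥ (0 : ℝ),
        v = sInf {w : ℝ | ∃ α ≤ (0 : ℝ), w = Psi lam β x μ y α}} := by
  have hp : ∀ α ≤ (0 : ℝ), α * x ≤ p0B lam β α x :=
    fun α hα => mul_le_p0B hβ.le hx (fun k => (hlam_bd k).1) hα
  simp only [Psi_eq_coupling_sub]
  exact ⟨fun α _ => concaveOn_coupling_sub (convexOn_f0B hp),
    fun y _ => strictConvexOn_coupling_sub hlam0 _ (convex_Iic 0),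
    sInf_sSup_coupling_sub_eq_sSup_sInf hlam0 (convexOn_f0B hp) fun _ => neg_p0B_zero_le_f0B hp⟩

/-- Minimax exchange: `Ψ` is concave in `y`, strictly convex in `α`, and
the infimum over `α ≤ 0` and the supremum over `y ≥ 0` commute. -/
theorem stmt_5 (lam : EuclideanSpace ℝ (Fin 3) → ℝ)
    (hlam_cont : Continuous lam) (hlam0 : 0 < lam 0)
    (hlam_bd : ∀ k, 0 ≤ lam k ∧ lam k ≤ lam 0) (hlamL2 : MemLp lam 2 volume)
    (β x μ : ℝ) (hβ : 0 < β) (hx : 0 ≤ x) :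
    (∀ α ≤ (0 : ℝ), ConcaveOn ℝ (Set.Ici (0 : ℝ)) (fun y => Psi lam β x μ y α)) ∧
    (∀ y ≥ (0 : ℝ), StrictConvexOn ℝ (Set.Iic (0 : ℝ)) (fun α => Psi lam β x μ y α)) ∧
    sInf {v : ℝ | ∃ α ≤ (0 : ℝ),
        v = sSup {w : ℝ | ∃ y ≥ (0 : ℝ), w = Psi lam β x μ y α}}
      = sSup {v : ℝ | ∃ y ≥ (0 : ℝ),
        v = sInf {w : ℝ | ∃ α ≤ (0 : ℝ), w = Psi lam β x μ y α}} :=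
  stmt_5_general lam hlam0 hlam_bd β x μ hβ hx
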